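/- arXiv:2305.02544 — 4 statements merged into one kernel-verified Lean document; each statement's English description precedes it below -/
import Mathlib

section
/- Let A, B be positive semidefinite d×d matrices with B ⪯ A, and let p ≥ 1 be a natural number. Then tr(B^p) ≤ tr(A^{p−1} B). -/
open Matrix

section aux

variable {n : Type*} [Fintype n] [DecidableEq n]

lemma conj_pow_aux (U A : Matrix n n ℝ) (hU : U * star U = 1) (hU' : star U * U = 1)
    (m : ℕ) : star U * A ^ m * U = (star U * A * U) ^ m := by
  induction m with
  | zero => simpa using hU'
  | succ k ih =>
    rw [pow_succ, pow_succ, ← ih]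
    have h : star U * A ^ k * U * (star U * A * U)
        = star U * A ^ k * (U * star U) * (A * U) := by
      simp only [Matrix.mul_assoc]
    rw [h, hU, Matrix.mul_one]
    simp only [Matrix.mul_assoc]

lemma diag_nonneg_aux {P : Matrix n n ℝ} (hP : P.PosSemidef) (k : n) : 0 ≤ P k k := by
  exact hP.diag_nonneg

/-- For a PSD real matrix, (M k k)^m ≤ (M^m) k k. -/
lemma diag_entry_pow_le {M : Matrix n n ℝ} (hM : M.PosSemidef) (m : ℕ) (k : n) :
    (M k k) ^ m ≤ (M ^ m) k k := by
  classical
  have hH := hM.1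
  set U : Matrix n n ℝ := (hH.eigenvectorUnitary : Matrix n n ℝ) with hUdef
  have hU : U * star U = 1 := mem_unitaryGroup_iff.mp hH.eigenvectorUnitary.2
  have hU' : star U * U = 1 := mem_unitaryGroup_iff'.mp hH.eigenvectorUnitary.2
  have hspec : M = U * diagonal hH.eigenvalues * star U := by
    have := hH.spectral_theorem
    rwa [RCLike.ofReal_real_eq_id, Function.id_comp] at this
  have hpow : M ^ m = U * diagonal (fun i => hH.eigenvalues i ^ m) * star U := by
    have h1 : star U * M ^ m * U = (star U * M * U) ^ m := conj_pow_aux U M hU hU' m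
    have h2 : star U * M * U = diagonal hH.eigenvalues := by
      conv_lhs => rw [hspec]
      calc star U * (U * diagonal hH.eigenvalues * star U) * U
          = (star U * U) * diagonal hH.eigenvalues * (star U * U) := by simp only [Matrix.mul_assoc]
        _ = diagonal hH.eigenvalues := by rw [hU']; simp
    have h3 : star U * M ^ m * U = diagonal (fun i => hH.eigenvalues i ^ m) := by
      rw [h1, h2, diagonal_pow]
      rfl
    calc M ^ m = (U * star U) * M ^ m * (U * star U) := by rw [hU]; simp
      _ = U * (star U * M ^ m * U) * star U := by simp only [Matrix.mul_assoc]
      _ = U * diagonal (fun i => hH.eigenvalues i ^ m) * star U := by rw [h3]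
  -- entries
  have hentry : ∀ (f : n → ℝ), (U * diagonal f * star U) k k = ∑ i, f i * (U k i) ^ 2 := by
    intro f
    rw [Matrix.mul_apply]
    simp only [Matrix.mul_diagonal, star_apply, star_trivial]
    apply Finset.sum_congr rfl
    intro i _
    ring
  have hw_nonneg : ∀ i ∈ Finset.univ, (0:ℝ) ≤ (U k i) ^ 2 := fun i _ => sq_nonneg _
  have hw_sum : ∑ i, (U k i) ^ 2 = 1 := by
    have : (U * star U) k k = (1 : Matrix n n ℝ) k k := by rw [hU]
    rw [Matrix.mul_apply] at this
    simp only [star_apply, star_trivial, Matrix.one_apply_eq] at this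
    rw [← this]
    apply Finset.sum_congr rfl
    intro i _
    ring
  have hz_nonneg : ∀ i ∈ Finset.univ, (0:ℝ) ≤ hH.eigenvalues i := fun i _ =>
    hM.eigenvalues_nonneg i
  have jensen := Real.pow_arith_mean_le_arith_mean_pow Finset.univ
    (fun i => (U k i) ^ 2) hH.eigenvalues hw_nonneg hw_sum hz_nonneg m
  have hMkk : M k k = ∑ i, (U k i) ^ 2 * hH.eigenvalues i := by
    conv_lhs => rw [hspec]
    rw [hentry]
    exact Finset.sum_congr rfl fun i _ => mul_comm _ _
  have hMmkk : (M ^ m) k k = ∑ i, (U k i) ^ 2 * hH.eigenvalues i ^ m := by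
    conv_lhs => rw [hpow]
    rw [hentry]
    exact Finset.sum_congr rfl fun i _ => mul_comm _ _
  rw [hMkk, hMmkk]
  exact jensen

end aux

/-- For PSD matrices B ⪯ A and p ≥ 1, tr(B^p) ≤ tr(A^{p-1} B). -/
theorem trace_pow_le_trace_pow_mul {d p : ℕ} (hp : 1 ≤ p)
    (A B : Matrix (Fin d) (Fin d) ℝ)
    (hA : A.PosSemidef) (hB : B.PosSemidef) (hBA : (A - B).PosSemidef) :
    (B ^ p).trace ≤ (A ^ (p - 1) * B).trace := by
  classical
  have hH := hB.1
  set U : Matrix (Fin d) (Fin d) ℝ := (hH.eigenvectorUnitary : Matrix (Fin d) (Fin d) ℝ)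
    with hUdef
  have hU : U * star U = 1 := mem_unitaryGroup_iff.mp hH.eigenvectorUnitary.2
  have hU' : star U * U = 1 := mem_unitaryGroup_iff'.mp hH.eigenvectorUnitary.2
  set μ : Fin d → ℝ := hH.eigenvalues with hμdef
  have hspec : B = U * diagonal μ * star U := by
    have := hH.spectral_theorem
    rwa [RCLike.ofReal_real_eq_id, Function.id_comp] at this
  have hdiagB : star U * B * U = diagonal μ := by
    rw [hspec]
    calc star U * (U * diagonal μ * star U) * U
        = (star U * U) * diagonal μ * (star U * U) := by simp only [Matrix.mul_assoc]
      _ = diagonal μ := by rw [hU']; simp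
  set M : Matrix (Fin d) (Fin d) ℝ := star U * A * U with hMdef
  have hMpsd : M.PosSemidef := by
    have := hA.conjTranspose_mul_mul_same U
    simpa [hMdef, Matrix.star_eq_conjTranspose] using this
  -- tr(B^p) = ∑ μ_k ^ p
  have htrBp : (B ^ p).trace = ∑ k, μ k ^ p := by
    have hpow : B ^ p = U * diagonal (fun i => μ i ^ p) * star U := by
      have h1 : star U * B ^ p * U = (star U * B * U) ^ p := conj_pow_aux U B hU hU' p
      have h3 : star U * B ^ p * U = diagonal (fun i => μ i ^ p) := by
        rw [h1, hdiagB, diagonal_pow]; rfl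
      calc B ^ p = (U * star U) * B ^ p * (U * star U) := by rw [hU]; simp
        _ = U * (star U * B ^ p * U) * star U := by simp only [Matrix.mul_assoc]
        _ = U * diagonal (fun i => μ i ^ p) * star U := by rw [h3]
    rw [hpow, Matrix.trace_mul_cycle, hU', Matrix.one_mul, Matrix.trace_diagonal]
  -- tr(A^{p-1} B) = ∑ (M^{p-1})_{kk} μ_k
  have htrAB : (A ^ (p - 1) * B).trace = ∑ k, (M ^ (p - 1)) k k * μ k := by
    have hconj : star U * A ^ (p - 1) * U = M ^ (p - 1) := by
      rw [hMdef]; exact conj_pow_aux U A hU hU' (p - 1)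
    calc (A ^ (p - 1) * B).trace
        = (A ^ (p - 1) * (U * diagonal μ * star U)).trace := by rw [← hspec]
      _ = (star U * A ^ (p - 1) * U * diagonal μ).trace := by
          rw [show A ^ (p - 1) * (U * diagonal μ * star U)
              = (A ^ (p - 1) * U * diagonal μ) * star U by simp only [Matrix.mul_assoc],
            Matrix.trace_mul_comm,
            show star U * (A ^ (p - 1) * U * diagonal μ)
              = (star U * A ^ (p - 1) * U) * diagonal μ by simp only [Matrix.mul_assoc]]
      _ = (M ^ (p - 1) * diagonal μ).trace := by rw [hconj]
      _ = ∑ k, (M ^ (p - 1)) k k * μ k := by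
          rw [Matrix.trace]
          apply Finset.sum_congr rfl
          intro k _
          simp [Matrix.diag, Matrix.mul_diagonal]
  rw [htrBp, htrAB]
  apply Finset.sum_le_sum
  intro k _
  have hμk : 0 ≤ μ k := hB.eigenvalues_nonneg k
  have hMk : μ k ≤ M k k := by
    have hdiff : (M - diagonal μ).PosSemidef := by
      have h1 : M - diagonal μ = star U * (A - B) * U := by
        rw [hMdef, ← hdiagB]
        simp [Matrix.mul_sub, Matrix.sub_mul]
      rw [h1]
      have := hBA.conjTranspose_mul_mul_same U
      simpa [Matrix.star_eq_conjTranspose] using this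
    have := diag_nonneg_aux hdiff k
    simp only [Matrix.sub_apply, Matrix.diagonal_apply_eq] at this
    linarith
  calc μ k ^ p = μ k ^ (p - 1) * μ k := by
        rw [← pow_succ]
        congr 1
        omega
    _ ≤ (M k k) ^ (p - 1) * μ k := by
        apply mul_le_mul_of_nonneg_right _ hμk
        exact pow_le_pow_left₀ hμk hMk _
    _ ≤ (M ^ (p - 1)) k k * μ k := by
        apply mul_le_mul_of_nonneg_right _ hμk
        exact diag_entry_pow_le hMpsd (p - 1) k
end

section
/- Let A be a positive semidefinite d×d matrix. Then for any β > 0 and z ∼ N(0, I_d), Pr[z^T A z ≥ β·tr(A)] ≥ 1 − √(eβ). -/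
open Matrix MeasureTheory ProbabilityTheory ENNReal Real

section Aux

/-- Lintegral of a product of functions of separate coordinates over a pi measure (Fin case). -/
theorem lintegral_fin_nat_prod_eq_prod' {n : ℕ} {E : Fin n → Type*}
    [∀ i, MeasurableSpace (E i)] (μ : ∀ i, Measure (E i)) [∀ i, SigmaFinite (μ i)]
    {f : (i : Fin n) → E i → ℝ≥0∞} (hf : ∀ i, Measurable (f i)) :
    ∫⁻ x : (i : Fin n) → E i, ∏ i, f i (x i) ∂Measure.pi μ = ∏ i, ∫⁻ x, f i x ∂μ i := by
  induction n with
  | zero => simp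
  | succ n ih =>
    have hmeas : Measurable fun x : (i : Fin (n+1)) → E i => ∏ i, f i (x i) :=
      Finset.measurable_prod _ fun i _ => (hf i).comp (measurable_pi_apply i)
    have h1 := ((measurePreserving_piFinSuccAbove μ 0).symm).lintegral_comp hmeas
    rw [← h1]
    simp_rw [MeasurableEquiv.piFinSuccAbove_symm_apply, Fin.insertNthEquiv,
      Fin.prod_univ_succ, Fin.insertNth_zero]
    simp only [Fin.zero_succAbove, Equiv.coe_fn_mk, Fin.cons_zero, Fin.cons_succ, cast_eq]
    show ∫⁻ a : E 0 × ((j : Fin n) → E j.succ), f 0 a.1 * ∏ x : Fin n, f x.succ (a.2 x)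
      ∂(μ 0).prod (Measure.pi fun j => μ j.succ) = _
    rw [lintegral_prod_mul (f := f 0)
      (g := fun y : (j : Fin n) → E j.succ => ∏ x : Fin n, f x.succ (y x))
      (hf 0).aemeasurable
      (Finset.measurable_prod _ fun i _ => (hf _).comp (measurable_pi_apply i)).aemeasurable]
    rw [ih (fun i => μ i.succ) fun i => hf _]

/-- Lintegral of a product of functions of separate coordinates over a pi measure. -/
theorem lintegral_fintype_prod_eq_prod' {ι : Type*} [Fintype ι] {E : ι → Type*}
    [∀ i, MeasurableSpace (E i)] (μ : ∀ i, Measure (E i)) [∀ i, SigmaFinite (μ i)]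
    {f : (i : ι) → E i → ℝ≥0∞} (hf : ∀ i, Measurable (f i)) :
    ∫⁻ x : (i : ι) → E i, ∏ i, f i (x i) ∂Measure.pi μ = ∏ i, ∫⁻ x, f i x ∂μ i := by
  let e := (Fintype.equivFin ι).symm
  have hmeas : Measurable fun x : (i : ι) → E i => ∏ i, f i (x i) :=
    Finset.measurable_prod _ fun i _ => (hf i).comp (measurable_pi_apply i)
  have h1 := (measurePreserving_piCongrLeft μ e).lintegral_comp hmeas
  rw [← h1]
  have h2 : ∀ a : (j : Fin (Fintype.card ι)) → E (e j),
      ∏ i, f i ((MeasurableEquiv.piCongrLeft E e) a i) = ∏ j, f (e j) (a j) := by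
    intro a
    rw [← e.prod_comp (fun i => f i ((MeasurableEquiv.piCongrLeft E e) a i))]
    simp only [MeasurableEquiv.coe_piCongrLeft]
    exact Finset.prod_congr rfl fun x _ =>
      congrArg (f (e x)) (Equiv.piCongrLeft_apply_apply E e a x)
  simp_rw [h2]
  rw [lintegral_fin_nat_prod_eq_prod' (fun i => μ (e i)) (fun i => hf (e i)),
    ← e.prod_comp (fun i => ∫⁻ x, f i x ∂μ i)]

/-- The standard Gaussian product measure as a density against Lebesgue measure. -/
theorem pi_gaussian_eq_withDensity (d : ℕ) :
    (Measure.pi fun _ : Fin d => gaussianReal 0 1) =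
      (volume : Measure (Fin d → ℝ)).withDensity fun z => ∏ i, gaussianPDF 0 1 (z i) := by
  apply Measure.pi_eq
  intro s hs
  rw [withDensity_apply _ (MeasurableSet.univ_pi hs)]
  have hind : ∀ z : Fin d → ℝ, (Set.pi Set.univ s).indicator
      (fun z : Fin d → ℝ => ∏ i, gaussianPDF 0 1 (z i)) z
      = ∏ i, (s i).indicator (gaussianPDF 0 1) (z i) := by
    intro z
    by_cases hz : z ∈ Set.pi Set.univ s
    · rw [Set.indicator_of_mem hz]
      exact Finset.prod_congr rfl fun i _ => (Set.indicator_of_mem (hz i trivial) _).symm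
    · rw [Set.indicator_of_notMem hz]
      obtain ⟨i, hi⟩ : ∃ i, z i ∉ s i := by simpa [Set.mem_pi] using hz
      exact (Finset.prod_eq_zero (Finset.mem_univ i) (Set.indicator_of_notMem hi _)).symm
  rw [← lintegral_indicator (MeasurableSet.univ_pi hs)]
  simp_rw [hind]
  rw [volume_pi, lintegral_fintype_prod_eq_prod' _
    (fun i => (measurable_gaussianPDF 0 1).indicator (hs i))]
  refine Finset.prod_congr rfl fun i _ => ?_
  rw [lintegral_indicator (hs i), ← gaussianReal_apply 0 one_ne_zero (s i)]

/-- The Gaussian density product written via the squared norm. -/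
theorem prod_gaussianPDF_eq (d : ℕ) (z : Fin d → ℝ) :
    ∏ i, gaussianPDF 0 1 (z i) =
      ENNReal.ofReal ((Real.sqrt (2 * Real.pi))⁻¹ ^ d * Real.exp (-(∑ i, z i ^ 2) / 2)) := by
  have h1 : ∀ x : ℝ, gaussianPDFReal 0 1 x = (Real.sqrt (2 * Real.pi))⁻¹ *
      Real.exp (-(x ^ 2) / 2) := by
    intro x
    simp [gaussianPDFReal]
  simp only [gaussianPDF]
  rw [← ENNReal.ofReal_prod_of_nonneg fun i _ => gaussianPDFReal_nonneg 0 1 (z i)]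
  congr 1
  simp_rw [h1]
  rw [Finset.prod_mul_distrib, Finset.prod_const, ← Real.exp_sum, Finset.card_univ,
    Fintype.card_fin]
  congr 1
  rw [← Finset.sum_div, Finset.sum_neg_distrib]

/-- Lebesgue measure on `Fin d → ℝ` is preserved by an orthogonal matrix. -/
theorem measurePreserving_mulVec_volume {d : ℕ} (M : Matrix (Fin d) (Fin d) ℝ)
    (h1 : Mᵀ * M = 1) :
    MeasurePreserving (fun z : Fin d → ℝ => M *ᵥ z) volume volume := by
  have hdet : M.det = 1 ∨ M.det = -1 := by
    have : M.det * M.det = 1 := by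
      have := congrArg Matrix.det h1
      rwa [Matrix.det_mul, Matrix.det_transpose, Matrix.det_one] at this
    rcases mul_self_eq_one_iff.mp this with h | h
    · exact Or.inl h
    · exact Or.inr h
  have hdet' : LinearMap.det (Matrix.toLin' M) ≠ 0 := by
    rw [LinearMap.det_toLin']
    rcases hdet with h | h <;> rw [h] <;> norm_num
  have hmeas : Measurable fun z : Fin d → ℝ => M *ᵥ z := by
    apply measurable_pi_lambda
    intro i
    simp only [Matrix.mulVec, dotProduct]
    exact Finset.measurable_sum _ fun j _ => (measurable_pi_apply j).const_mul _
  refine ⟨hmeas, ?_⟩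
  have heq : (fun z : Fin d → ℝ => M *ᵥ z) = ⇑(Matrix.toLin' M) := by
    funext z; rw [Matrix.toLin'_apply]
  rw [heq, Real.map_linearMap_volume_pi_eq_smul_volume_pi hdet', LinearMap.det_toLin']
  have : |M.det⁻¹| = 1 := by rcases hdet with h | h <;> rw [h] <;> norm_num
  rw [this]
  simp

/-- Invariance of the standard Gaussian product measure under orthogonal matrices,
lintegral version. -/
theorem lintegral_mulVec_gaussian {d : ℕ} (M : Matrix (Fin d) (Fin d) ℝ)
    (h1 : Mᵀ * M = 1) {f : (Fin d → ℝ) → ℝ≥0∞} (hf : Measurable f) :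
    ∫⁻ z, f (M *ᵥ z) ∂(Measure.pi fun _ : Fin d => gaussianReal 0 1) =
      ∫⁻ z, f z ∂(Measure.pi fun _ : Fin d => gaussianReal 0 1) := by
  have hnorm : ∀ z : Fin d → ℝ, ∑ i, (M *ᵥ z) i ^ 2 = ∑ i, z i ^ 2 := by
    intro z
    have e1 : ∑ i, (M *ᵥ z) i ^ 2 = (M *ᵥ z) ⬝ᵥ (M *ᵥ z) := by
      simp [dotProduct, sq]
    have e2 : ∑ i, z i ^ 2 = z ⬝ᵥ z := by simp [dotProduct, sq]
    rw [e1, e2, Matrix.dotProduct_mulVec]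
    have : (M *ᵥ z) ᵥ* M = z ᵥ* (Mᵀ * M) := by
      rw [← Matrix.vecMul_vecMul, ← Matrix.vecMul_transpose]
    rw [this, h1, Matrix.vecMul_one]
  have hD : Measurable fun z : Fin d → ℝ => ∏ i, gaussianPDF 0 1 (z i) :=
    Finset.measurable_prod _ fun i _ =>
      (measurable_gaussianPDF 0 1).comp (measurable_pi_apply i)
  have hMP := measurePreserving_mulVec_volume M h1
  rw [pi_gaussian_eq_withDensity, lintegral_withDensity_eq_lintegral_mul _ hD hf,
    lintegral_withDensity_eq_lintegral_mul _ hD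
      (show Measurable fun z : Fin d → ℝ => f (M *ᵥ z) from hf.comp hMP.measurable)]
  have key : ∀ z : Fin d → ℝ,
      ((fun z : Fin d → ℝ => ∏ i, gaussianPDF 0 1 (z i)) * fun z => f (M *ᵥ z)) z =
      ((fun z : Fin d → ℝ => ∏ i, gaussianPDF 0 1 (z i)) * f) (M *ᵥ z) := by
    intro z
    simp only [Pi.mul_apply]
    rw [prod_gaussianPDF_eq, prod_gaussianPDF_eq, hnorm]
  simp_rw [key]
  exact hMP.lintegral_comp (hD.mul hf)

/-- One-dimensional Gaussian MGF-type integral. -/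
theorem lintegral_exp_neg_sq_gaussian {s : ℝ} (hs : 0 ≤ s) :
    ∫⁻ x, ENNReal.ofReal (Real.exp (-(s * x ^ 2))) ∂(gaussianReal 0 1) =
      ENNReal.ofReal ((Real.sqrt (1 + 2 * s))⁻¹) := by
  have hs2 : (0:ℝ) < s + 1/2 := by linarith
  rw [gaussianReal_of_var_ne_zero 0 one_ne_zero,
    lintegral_withDensity_eq_lintegral_mul _ (measurable_gaussianPDF 0 1)
      (by fun_prop : Measurable fun x : ℝ => ENNReal.ofReal (Real.exp (-(s * x ^ 2))))]
  have hfun : ∀ x : ℝ, (gaussianPDF 0 1 * fun x => ENNReal.ofReal (Real.exp (-(s * x ^ 2)))) x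
      = ENNReal.ofReal ((Real.sqrt (2 * Real.pi))⁻¹ * Real.exp (-(s + 1/2) * x ^ 2)) := by
    intro x
    simp only [Pi.mul_apply, gaussianPDF]
    rw [← ENNReal.ofReal_mul (gaussianPDFReal_nonneg 0 1 x)]
    congr 1
    have : gaussianPDFReal 0 1 x = (Real.sqrt (2 * Real.pi))⁻¹ * Real.exp (-(x ^ 2) / 2) := by
      simp [gaussianPDFReal]
    rw [this, mul_assoc, ← Real.exp_add]
    congr 2
    ring
  simp_rw [hfun]
  have hint : Integrable (fun x : ℝ =>
      (Real.sqrt (2 * Real.pi))⁻¹ * Real.exp (-(s + 1/2) * x ^ 2)) :=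
    (integrable_exp_neg_mul_sq hs2).const_mul _
  rw [← ofReal_integral_eq_lintegral_ofReal hint (Filter.Eventually.of_forall fun x => by positivity)]
  congr 1
  rw [integral_const_mul, integral_gaussian]
  have hπ : (0:ℝ) < Real.pi := Real.pi_pos
  have h12 : (0:ℝ) < 1 + 2 * s := by linarith
  have hmm : Real.sqrt (2 * Real.pi) = Real.sqrt (1 + 2*s) * Real.sqrt (Real.pi / (s + 1/2)) := by
    rw [← Real.sqrt_mul h12.le]
    congr 1
    field_simp
    ring
  have hpos : (0:ℝ) < Real.sqrt (Real.pi / (s + 1/2)) := Real.sqrt_pos.mpr (by positivity)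
  rw [hmm, mul_inv, mul_assoc, inv_mul_cancel₀ hpos.ne', mul_one]

/-- `1 + ∑ a ≤ ∏ (1 + a)` for nonnegative `a`. -/
theorem one_add_sum_le_prod_one_add {ι : Type*} (s : Finset ι) (a : ι → ℝ)
    (ha : ∀ i ∈ s, 0 ≤ a i) : 1 + ∑ i ∈ s, a i ≤ ∏ i ∈ s, (1 + a i) := by
  classical
  induction s using Finset.induction_on with
  | empty => simp
  | @insert j t hx ih =>
    rw [Finset.sum_insert hx, Finset.prod_insert hx]
    have h1 : 1 + ∑ i ∈ t, a i ≤ ∏ i ∈ t, (1 + a i) := ih fun i hi => ha i (Finset.mem_insert_of_mem hi)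
    have h2 : 0 ≤ a j := ha j (Finset.mem_insert_self _ _)
    have h3 : (0:ℝ) ≤ ∑ i ∈ t, a i := Finset.sum_nonneg fun i hi => ha i (Finset.mem_insert_of_mem hi)
    nlinarith

/-- Square root of a finite product of nonnegative reals. -/
theorem sqrt_prod' {ι : Type*} (s : Finset ι) (a : ι → ℝ) (ha : ∀ i ∈ s, 0 ≤ a i) :
    Real.sqrt (∏ i ∈ s, a i) = ∏ i ∈ s, Real.sqrt (a i) := by
  classical
  induction s using Finset.induction_on with
  | empty => simp
  | @insert j t hx ih =>
    rw [Finset.prod_insert hx, Finset.prod_insert hx,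
      Real.sqrt_mul (ha j (Finset.mem_insert_self _ _)),
      ih fun i hi => ha i (Finset.mem_insert_of_mem hi)]

end Aux

/-- Anti-concentration of a PSD Gaussian quadratic form:
Pr[z^T A z ≥ β tr(A)] ≥ 1 - √(eβ). -/
theorem gaussian_quadratic_anticoncentration {d : ℕ}
    (A : Matrix (Fin d) (Fin d) ℝ) (hA : A.PosSemidef) (β : ℝ) (hβ : 0 < β) :
    1 - Real.sqrt (Real.exp 1 * β) ≤
      ((Measure.pi fun _ : Fin d => gaussianReal 0 1)
        {z : Fin d → ℝ | β * A.trace ≤ ∑ i, ∑ j, z i * A i j * z j}).toReal := by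
  classical
  set γ := (Measure.pi fun _ : Fin d => gaussianReal 0 1) with hγ
  haveI : IsProbabilityMeasure γ := by
    rw [hγ]; infer_instance
  set Q : (Fin d → ℝ) → ℝ := fun z => ∑ i, ∑ j, z i * A i j * z j with hQdef
  have hQdot : ∀ z, Q z = z ⬝ᵥ (A *ᵥ z) := by
    intro z
    simp [hQdef, dotProduct, Matrix.mulVec, Finset.mul_sum, mul_assoc]
  have hQmeas : Measurable Q := by
    apply Finset.measurable_sum
    intro i _
    apply Finset.measurable_sum
    intro j _
    exact ((measurable_pi_apply i).mul_const _).mul (measurable_pi_apply j)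
  set S := {z : Fin d → ℝ | β * A.trace ≤ Q z} with hSdef
  have hSmeas : MeasurableSet S := measurableSet_le measurable_const hQmeas
  -- Spectral data
  set lam := hA.1.eigenvalues with hlam
  set V : Matrix (Fin d) (Fin d) ℝ := (hA.1.eigenvectorUnitary : Matrix (Fin d) (Fin d) ℝ)
    with hV
  have hstar : star V = Vᵀ := by
    rw [Matrix.star_eq_conjTranspose]
    ext i j
    simp [Matrix.conjTranspose_apply]
  have hVV : Vᵀ * V = 1 := by
    rw [← hstar]
    exact Matrix.mem_unitaryGroup_iff'.mp hA.1.eigenvectorUnitary.2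
  have hVV' : V * Vᵀ = 1 := by
    rw [← hstar]
    exact Matrix.mem_unitaryGroup_iff.mp hA.1.eigenvectorUnitary.2
  have hspec : A = V * Matrix.diagonal lam * Vᵀ := by
    rw [← hstar]
    have h := hA.1.spectral_theorem
    convert h using 2
    rw [Unitary.conjStarAlgAut_apply]
    simp [hV, hlam]
  have hlam_nonneg : ∀ i, 0 ≤ lam i := fun i => hA.eigenvalues_nonneg i
  have htrace : A.trace = ∑ i, lam i := by
    rw [hspec, Matrix.trace_mul_cycle, hVV, Matrix.one_mul, Matrix.trace_diagonal]
  have htrace_nonneg : 0 ≤ A.trace := htrace ▸ Finset.sum_nonneg fun i _ => hlam_nonneg i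
  -- quadratic form in eigencoordinates
  have hQeig : ∀ z, Q z = ∑ i, lam i * ((Vᵀ *ᵥ z) i) ^ 2 := by
    intro z
    rw [hQdot z, hspec]
    rw [← Matrix.mulVec_mulVec, ← Matrix.mulVec_mulVec, Matrix.dotProduct_mulVec,
      ← Matrix.mulVec_transpose]
    simp only [dotProduct, Matrix.mulVec_diagonal]
    exact Finset.sum_congr rfl fun i _ => by ring
  -- nonnegativity of Q
  have hQnonneg : ∀ z, 0 ≤ Q z := by
    intro z
    rw [hQeig z]
    exact Finset.sum_nonneg fun i _ => mul_nonneg (hlam_nonneg i) (sq_nonneg _)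
  by_cases htr : A.trace = 0
  · -- trivial case: the event is everything
    have huniv : S = Set.univ := by
      ext z
      simp only [hSdef, Set.mem_setOf_eq, Set.mem_univ, iff_true, htr, mul_zero]
      exact hQnonneg z
    rw [huniv, measure_univ, ENNReal.toReal_one]
    have : 0 ≤ Real.sqrt (Real.exp 1 * β) := Real.sqrt_nonneg _
    linarith
  by_cases hβ1 : 1 ≤ Real.exp 1 * β
  · -- trivial case: RHS nonpositive
    have h1 : 1 ≤ Real.sqrt (Real.exp 1 * β) := by
      nlinarith [Real.sq_sqrt (by positivity : (0:ℝ) ≤ Real.exp 1 * β),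
        Real.sqrt_nonneg (Real.exp 1 * β)]
    have h2 := ENNReal.toReal_nonneg (a := γ S)
    linarith
  -- main case
  have htrpos : 0 < A.trace := lt_of_le_of_ne htrace_nonneg (Ne.symm htr)
  have hβlt1 : β < 1 := by
    by_contra h
    push_neg at h
    have : (1:ℝ) < Real.exp 1 := by
      have := Real.add_one_lt_exp (x := 1) one_ne_zero
      linarith
    nlinarith
  set t := (1 - β) / (2 * β * A.trace) with ht
  have htpos : 0 < t := by
    apply div_pos (by linarith) (by positivity)
  set c := β * A.trace with hc
  have hcpos : 0 < c := mul_pos hβ htrpos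
  -- the MGF bound
  set F : (Fin d → ℝ) → ℝ≥0∞ := fun z => ENNReal.ofReal (Real.exp (-(t * Q z))) with hF
  have hFmeas : Measurable F := by
    apply ENNReal.measurable_ofReal.comp
    exact (Real.measurable_exp.comp (hQmeas.const_mul t).neg)
  have hMGF : ∫⁻ z, F z ∂γ ≤ ENNReal.ofReal ((Real.sqrt (1 + 2 * t * A.trace))⁻¹) := by
    have hG : Measurable fun w : Fin d → ℝ =>
        ENNReal.ofReal (Real.exp (-(t * ∑ i, lam i * w i ^ 2))) := by
      apply ENNReal.measurable_ofReal.comp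
      apply Real.measurable_exp.comp
      apply Measurable.neg
      apply Measurable.const_mul
      exact Finset.measurable_sum _ fun i _ =>
        ((measurable_pi_apply i).pow_const 2).const_mul _
    have e1 : ∫⁻ z, F z ∂γ = ∫⁻ w, ENNReal.ofReal (Real.exp (-(t * ∑ i, lam i * w i ^ 2))) ∂γ := by
      calc ∫⁻ z, F z ∂γ
          = ∫⁻ z, ENNReal.ofReal (Real.exp (-(t * ∑ i, lam i * ((Vᵀ *ᵥ z) i) ^ 2))) ∂γ := by
            simp_rw [hF, hQeig]
        _ = ∫⁻ w, ENNReal.ofReal (Real.exp (-(t * ∑ i, lam i * w i ^ 2))) ∂γ := by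
            rw [hγ]
            exact lintegral_mulVec_gaussian Vᵀ (by rw [Matrix.transpose_transpose, hVV']) hG
    have e2 : ∀ w : Fin d → ℝ, ENNReal.ofReal (Real.exp (-(t * ∑ i, lam i * w i ^ 2)))
        = ∏ i, ENNReal.ofReal (Real.exp (-(t * lam i * w i ^ 2))) := by
      intro w
      rw [← ENNReal.ofReal_prod_of_nonneg fun i _ => (Real.exp_pos _).le, ← Real.exp_sum]
      congr 1
      rw [Finset.mul_sum, ← Finset.sum_neg_distrib]
      exact congrArg Real.exp (Finset.sum_congr rfl fun i _ => by ring)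
    have e3 : ∫⁻ w, ENNReal.ofReal (Real.exp (-(t * ∑ i, lam i * w i ^ 2))) ∂γ
        = ∏ i, ENNReal.ofReal ((Real.sqrt (1 + 2 * (t * lam i)))⁻¹) := by
      simp_rw [e2]
      rw [hγ, lintegral_fintype_prod_eq_prod'
        (f := fun (i : Fin d) (x : ℝ) => ENNReal.ofReal (Real.exp (-(t * lam i * x ^ 2))))
        _ (fun i => by fun_prop)]
      refine Finset.prod_congr rfl fun i _ => ?_
      rw [lintegral_exp_neg_sq_gaussian (mul_nonneg htpos.le (hlam_nonneg i))]
    rw [e1, e3]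
    -- now the product bound
    have hprod_nonneg : ∀ i ∈ Finset.univ, (0:ℝ) ≤ (Real.sqrt (1 + 2 * (t * lam i)))⁻¹ :=
      fun i _ => by positivity
    rw [← ENNReal.ofReal_prod_of_nonneg hprod_nonneg]
    apply ENNReal.ofReal_le_ofReal
    -- real inequality
    have hsum : 1 + 2 * t * A.trace ≤ ∏ i, (1 + 2 * (t * lam i)) := by
      have := one_add_sum_le_prod_one_add Finset.univ (fun i => 2 * (t * lam i))
        (fun i _ => by have := hlam_nonneg i; positivity)
      calc 1 + 2 * t * A.trace = 1 + ∑ i, 2 * (t * lam i) := by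
            rw [htrace, Finset.mul_sum]
            congr 1
            exact Finset.sum_congr rfl fun i _ => by ring
        _ ≤ _ := this
    rw [Finset.prod_inv_distrib,
      ← sqrt_prod' Finset.univ _ (fun i _ => by have := hlam_nonneg i; positivity)]
    have hpos1 : (0:ℝ) < 1 + 2 * t * A.trace := by positivity
    have hsq : Real.sqrt (1 + 2 * t * A.trace) ≤ Real.sqrt (∏ i, (1 + 2 * (t * lam i))) :=
      Real.sqrt_le_sqrt hsum
    have hpos2 : (0:ℝ) < Real.sqrt (1 + 2 * t * A.trace) := Real.sqrt_pos.mpr hpos1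
    exact inv_anti₀ hpos2 hsq
  -- Markov's inequality
  set ε := ENNReal.ofReal (Real.exp (-(t * c))) with hε
  have hε0 : ε ≠ 0 := by
    simp only [hε, ne_eq, ENNReal.ofReal_eq_zero, not_le]
    exact Real.exp_pos _
  have hsub : Sᶜ ⊆ {z | ε ≤ F z} := by
    intro z hz
    simp only [hSdef, Set.mem_compl_iff, Set.mem_setOf_eq, not_le, ← hc] at hz
    simp only [Set.mem_setOf_eq, hF, hε]
    apply ENNReal.ofReal_le_ofReal
    apply Real.exp_le_exp.mpr
    nlinarith
  have h6 : ε * γ Sᶜ ≤ ENNReal.ofReal ((Real.sqrt (1 + 2 * t * A.trace))⁻¹) := by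
    calc ε * γ Sᶜ ≤ ε * γ {z | ε ≤ F z} := mul_le_mul_right (measure_mono hsub) ε
      _ ≤ ∫⁻ z, F z ∂γ := mul_meas_ge_le_lintegral hFmeas ε
      _ ≤ _ := hMGF
  have hinv : ENNReal.ofReal (Real.exp (t * c)) * ε = 1 := by
    rw [hε, ← ENNReal.ofReal_mul (Real.exp_pos _).le, ← Real.exp_add]
    simp
  have h7 : γ Sᶜ ≤ ENNReal.ofReal (Real.exp (t * c) * (Real.sqrt (1 + 2 * t * A.trace))⁻¹) := by
    calc γ Sᶜ = (ENNReal.ofReal (Real.exp (t * c)) * ε) * γ Sᶜ := by rw [hinv, one_mul]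
      _ = ENNReal.ofReal (Real.exp (t * c)) * (ε * γ Sᶜ) := by rw [mul_assoc]
      _ ≤ ENNReal.ofReal (Real.exp (t * c)) *
          ENNReal.ofReal ((Real.sqrt (1 + 2 * t * A.trace))⁻¹) := mul_le_mul_right h6 _
      _ = _ := by rw [← ENNReal.ofReal_mul (Real.exp_pos _).le]
  -- arithmetic simplification of the bound
  have harith1 : 1 + 2 * t * A.trace = 1 / β := by
    rw [ht]
    field_simp
    ring
  have hsqrtval : (Real.sqrt (1 + 2 * t * A.trace))⁻¹ = Real.sqrt β := by
    rw [harith1, one_div, Real.sqrt_inv, inv_inv]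
  have htc : t * c = (1 - β) / 2 := by
    rw [hc, ht]
    field_simp
  have hbound : Real.exp (t * c) * (Real.sqrt (1 + 2 * t * A.trace))⁻¹
      ≤ Real.sqrt (Real.exp 1 * β) := by
    rw [htc, hsqrtval, Real.sqrt_mul (Real.exp_pos 1).le]
    have h1 : Real.exp ((1 - β) / 2) ≤ Real.exp (1 / 2) :=
      Real.exp_le_exp.mpr (by linarith)
    have h2 : Real.exp (1 / 2) = Real.sqrt (Real.exp 1) := Real.exp_half 1
    have h3 : (0:ℝ) ≤ Real.sqrt β := Real.sqrt_nonneg β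
    nlinarith [Real.exp_pos ((1 - β) / 2)]
  have h8 : γ Sᶜ ≤ ENNReal.ofReal (Real.sqrt (Real.exp 1 * β)) :=
    h7.trans (ENNReal.ofReal_le_ofReal hbound)
  -- conclude
  have hadd : γ S + γ Sᶜ = 1 := by
    rw [measure_add_measure_compl hSmeas]
    exact measure_univ
  have haddR : (γ S).toReal + (γ Sᶜ).toReal = 1 := by
    rw [← ENNReal.toReal_add (measure_ne_top γ S) (measure_ne_top γ Sᶜ), hadd]
    rfl
  have hy : (γ Sᶜ).toReal ≤ Real.sqrt (Real.exp 1 * β) :=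
    ENNReal.toReal_le_of_le_ofReal (Real.sqrt_nonneg _) h8
  linarith
end

section
/- Let G be a distribution on ℝ^d that is (20ε, γ)-stable with respect to a PSD matrix Σ, where 0 < 20ε ≤ γ < 1. Let U ∈ ℝ^{m×d} and let w : ℝ^d → [0,1] satisfy E_{X∼G}[w(X)] ≥ 1 − 7ε. Then for g(x) := ‖Ux‖₂², we have (1 − 1.35γ)⟨U^T U, Σ⟩ ≤ E_{X∼G}[w(X) g(X)] ≤ (1 + γ)⟨U^T U, Σ⟩. -/
open Matrix MeasureTheory

/-- The normalized weighted second moment matrix E_{X∼μ}[w(X) X Xᵀ] / E_{X∼μ}[w(X)]. -/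
noncomputable def weightedSecondMoment {d : ℕ} (μ : Measure (Fin d → ℝ))
    (w : (Fin d → ℝ) → ℝ) : Matrix (Fin d) (Fin d) ℝ :=
  Matrix.of fun i j => (∫ x, w x * (x i * x j) ∂μ) / ∫ x, w x ∂μ

/-- G is (ε,γ)-stable w.r.t. Σ: every weight function keeping mass ≥ 1-ε yields a
normalized weighted second moment between (1-γ)Σ and (1+γ)Σ in the PSD order. -/
def IsStable {d : ℕ} (μ : Measure (Fin d → ℝ)) (ε γ : ℝ)
    (S : Matrix (Fin d) (Fin d) ℝ) : Prop :=
  ∀ w : (Fin d → ℝ) → ℝ, (∀ x, 0 ≤ w x ∧ w x ≤ 1) →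
    1 - ε ≤ ∫ x, w x ∂μ →
    (weightedSecondMoment μ w - (1 - γ) • S).PosSemidef ∧
      ((1 + γ) • S - weightedSecondMoment μ w).PosSemidef

lemma trace_mul_nonneg' {n : ℕ} {A B : Matrix (Fin n) (Fin n) ℝ}
    (hA : A.PosSemidef) (hB : B.PosSemidef) : 0 ≤ (A * B).trace := by
  open scoped MatrixOrder in
  obtain ⟨C, rfl⟩ := CStarAlgebra.nonneg_iff_eq_star_mul_self.mp hA.nonneg
  rw [Matrix.star_eq_conjTranspose]
  rw [Matrix.mul_assoc, Matrix.trace_mul_comm]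
  refine Finset.sum_nonneg fun i _ => ?_
  have h := hB.dotProduct_mulVec_nonneg (C i)
  simp only [RCLike.star_def, dotProduct, Pi.star_apply, mulVec, star_trivial] at h
  simp only [Matrix.diag, Matrix.mul_apply, Matrix.conjTranspose_apply, star_trivial,
    Matrix.transpose_apply]
  calc (0:ℝ) ≤ ∑ j, C i j * ∑ k, B j k * C i k := h
    _ = ∑ j, ∑ k, C i j * B j k * C i k := by
        simp [Finset.mul_sum, mul_assoc]
    _ = ∑ k, ∑ j, C i j * B j k * C i k := Finset.sum_comm
    _ = ∑ k, (∑ j, C i j * B j k) * C i k := by simp [Finset.sum_mul]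

/-- Stability implication: for g(x) = ‖Ux‖₂²,
(1 - 1.35γ)⟨UᵀU, Σ⟩ ≤ E[w g] ≤ (1 + γ)⟨UᵀU, Σ⟩. -/
theorem stability_weighted_quadratic_bounds {d m : ℕ}
    (μ : Measure (Fin d → ℝ)) [IsProbabilityMeasure μ]
    (ε γ : ℝ) (hε : 0 < ε) (hεγ : 20 * ε ≤ γ) (hγ : γ < 1)
    (S : Matrix (Fin d) (Fin d) ℝ) (hS : S.PosSemidef)
    (hstable : IsStable μ (20 * ε) γ S)
    (hInt : ∀ i j : Fin d, Integrable (fun x => x i * x j) μ)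
    (U : Matrix (Fin m) (Fin d) ℝ)
    (w : (Fin d → ℝ) → ℝ) (hw : ∀ x, 0 ≤ w x ∧ w x ≤ 1)
    (hwE : 1 - 7 * ε ≤ ∫ x, w x ∂μ) :
    (1 - 1.35 * γ) * (Uᵀ * U * S).trace ≤
        (∫ x, w x * ∑ i, (U.mulVec x i) ^ 2 ∂μ) ∧
      (∫ x, w x * ∑ i, (U.mulVec x i) ^ 2 ∂μ) ≤ (1 + γ) * (Uᵀ * U * S).trace := by
  set W := ∫ x, w x ∂μ with hWdef
  have hε20 : ε < 1 / 20 := by linarith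
  have hWpos : 0 < W := lt_of_lt_of_le (by linarith) hwE
  -- w is integrable, since otherwise its integral would be 0
  have hwInt : Integrable w μ := by
    by_contra h
    rw [hWdef, integral_undef h] at hWpos
    exact lt_irrefl 0 hWpos
  have hW1 : W ≤ 1 := by
    calc W ≤ ∫ _x, (1:ℝ) ∂μ := integral_mono hwInt (integrable_const 1)
            (fun x => (hw x).2)
      _ = 1 := by simp
  -- integrability of w * (x j * x k)
  have hI : ∀ j k : Fin d, Integrable (fun x => w x * (x j * x k)) μ := by
    intro j k
    refine (hInt j k).bdd_mul (c := 1) hwInt.aestronglyMeasurable (ae_of_all _ fun x => ?_)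
    rw [Real.norm_eq_abs, abs_le]
    exact ⟨by linarith [(hw x).1], (hw x).2⟩
  set A := Uᵀ * U with hAdef
  -- pointwise identity
  have hpt : ∀ x : Fin d → ℝ, w x * ∑ i, (U.mulVec x i) ^ 2
      = ∑ j, ∑ k, A j k * (w x * (x j * x k)) := by
    intro x
    simp only [hAdef, mulVec, dotProduct, Matrix.mul_apply, Matrix.transpose_apply, sq,
      Finset.sum_mul, Finset.mul_sum]
    rw [Finset.sum_comm]
    refine Finset.sum_congr rfl fun j _ => ?_
    rw [Finset.sum_comm]
    exact Finset.sum_congr rfl fun k _ => Finset.sum_congr rfl fun i _ => by ring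
  -- integral as a double sum
  have key : (∫ x, w x * ∑ i, (U.mulVec x i) ^ 2 ∂μ)
      = ∑ j, ∑ k, A j k * ∫ x, w x * (x j * x k) ∂μ := by
    rw [show (fun x => w x * ∑ i, (U.mulVec x i) ^ 2)
        = fun x => ∑ j, ∑ k, A j k * (w x * (x j * x k)) from funext hpt]
    erw [integral_finset_sum _ (fun j _ => integrable_finset_sum _
      (fun k _ => (hI j k).const_mul _))]
    exact Finset.sum_congr rfl fun j _ => by
      rw [integral_finset_sum _ (fun k _ => (hI j k).const_mul _)]
      exact Finset.sum_congr rfl fun k _ => integral_const_mul _ _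
  set M := weightedSecondMoment μ w with hMdef
  have htr : W * (A * M).trace = ∑ j, ∑ k, A j k * ∫ x, w x * (x j * x k) ∂μ := by
    simp only [Matrix.trace, Matrix.diag, Matrix.mul_apply, hMdef, weightedSecondMoment,
      Matrix.of_apply, Finset.mul_sum]
    refine Finset.sum_congr rfl fun j _ => Finset.sum_congr rfl fun k _ => ?_
    have hsymm : (∫ x, w x * (x k * x j) ∂μ) = ∫ x, w x * (x j * x k) ∂μ := by
      congr 1; funext x; ring
    rw [hsymm]
    field_simp
    rw [← hWdef, mul_assoc, mul_div_cancel_left₀ _ hWpos.ne']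
  have hint_eq : (∫ x, w x * ∑ i, (U.mulVec x i) ^ 2 ∂μ) = W * (A * M).trace := by
    rw [key, htr]
  -- PSD facts
  have hA : A.PosSemidef := by
    have := Matrix.posSemidef_conjTranspose_mul_self U
    simpa [hAdef, Matrix.conjTranspose_eq_transpose_of_trivial] using this
  obtain ⟨h1, h2⟩ := hstable w hw (by linarith)
  have t1 : 0 ≤ (A * (M - (1 - γ) • S)).trace := trace_mul_nonneg' hA h1
  have t2 : 0 ≤ (A * ((1 + γ) • S - M)).trace := trace_mul_nonneg' hA h2
  rw [Matrix.mul_sub, Matrix.trace_sub, Matrix.mul_smul, Matrix.trace_smul,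
    smul_eq_mul, sub_nonneg] at t1 t2
  have hT : 0 ≤ (A * S).trace := trace_mul_nonneg' hA hS
  have hTeq : (Uᵀ * U * S).trace = (A * S).trace := by rw [hAdef]
  rw [hint_eq, hTeq]
  constructor
  · nlinarith [mul_le_mul_of_nonneg_left t1 hWpos.le,
      mul_nonneg hε.le (mul_nonneg (by linarith : (0:ℝ) ≤ γ) hT)]
  · have hTM0 : 0 ≤ (A * M).trace :=
      le_trans (by nlinarith : (0:ℝ) ≤ (1 - γ) * (A * S).trace) t1
    have := mul_le_mul_of_nonneg_right hW1 hTM0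
    linarith
end

section
/- Let 0 < 20ε ≤ γ < 1, and let G be (20ε, γ)-stable with respect to a PSD matrix Σ. Let U ∈ ℝ^{m×d}, w : ℝ^d → [0,1] with E_{X∼G}[w(X)] ≥ 1 − 3ε, and let S ⊆ ℝ^d satisfy E_{X∼G}[w(X)·1{X ∈ S}] ≤ 4ε. Then for g(x) := ‖Ux‖₂², E_{X∼G}[w(X) g(X) 1{X ∈ S}] ≤ 2.35 γ ⟨U^T U, Σ⟩. -/
open Matrix MeasureTheory

lemma trace_mul_psd_nonneg {d m : ℕ} (U : Matrix (Fin m) (Fin d) ℝ)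
    {P : Matrix (Fin d) (Fin d) ℝ} (hP : P.PosSemidef) :
    0 ≤ (Uᵀ * U * P).trace := by
  have h1 : (U * P * Uᵀ).PosSemidef := by
    simpa [Matrix.conjTranspose_eq_transpose_of_trivial] using hP.mul_mul_conjTranspose_same U
  rw [← Matrix.trace_mul_cycle U P Uᵀ]
  have : ∀ i, 0 ≤ (U * P * Uᵀ) i i := by
    intro i
    exact h1.diag_nonneg
  exact Finset.sum_nonneg fun i _ => this i

lemma key_pointwise {d m : ℕ} (U : Matrix (Fin m) (Fin d) ℝ) (r : ℝ) (x : Fin d → ℝ) :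
    r * ∑ i, (U.mulVec x i) ^ 2 = ∑ j, ∑ k, (Uᵀ * U) j k * (r * (x j * x k)) := by
  have h1 : ∀ i : Fin m, (U.mulVec x i) ^ 2 = ∑ j, ∑ k, (U i j * x j) * (U i k * x k) := by
    intro i
    rw [pow_two]
    simp [Matrix.mulVec, dotProduct, Finset.sum_mul_sum]
  calc r * ∑ i, (U.mulVec x i) ^ 2
      = ∑ i, ∑ j, ∑ k, r * ((U i j * x j) * (U i k * x k)) := by
        simp_rw [h1, Finset.mul_sum]
    _ = ∑ j, ∑ i, ∑ k, r * ((U i j * x j) * (U i k * x k)) := Finset.sum_comm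
    _ = ∑ j, ∑ k, ∑ i, r * ((U i j * x j) * (U i k * x k)) :=
        Finset.sum_congr rfl fun j _ => Finset.sum_comm
    _ = ∑ j, ∑ k, (Uᵀ * U) j k * (r * (x j * x k)) := by
        refine Finset.sum_congr rfl fun j _ => Finset.sum_congr rfl fun k _ => ?_
        simp only [Matrix.mul_apply, Matrix.transpose_apply, Finset.sum_mul]
        exact Finset.sum_congr rfl fun i _ => by ring

lemma trace_expand {d m : ℕ} (U : Matrix (Fin m) (Fin d) ℝ)
    (M : Matrix (Fin d) (Fin d) ℝ) :
    (Uᵀ * U * M).trace = ∑ j, ∑ k, (Uᵀ * U) j k * M k j := by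
  simp [Matrix.trace, Matrix.diag, Matrix.mul_apply]

/-- If E[w·1_S] ≤ 4ε then E[w g 1_S] ≤ 2.35γ⟨UᵀU,Σ⟩ for g(x) = ‖Ux‖₂². -/
theorem stability_thresholded_scores {d m : ℕ}
    (μ : Measure (Fin d → ℝ)) [IsProbabilityMeasure μ]
    (ε γ : ℝ) (hε : 0 < ε) (hεγ : 20 * ε ≤ γ) (hγ : γ < 1)
    (S : Matrix (Fin d) (Fin d) ℝ) (hS : S.PosSemidef)
    (hstable : IsStable μ (20 * ε) γ S)
    (hInt : ∀ i j : Fin d, Integrable (fun x => x i * x j) μ)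
    (U : Matrix (Fin m) (Fin d) ℝ)
    (w : (Fin d → ℝ) → ℝ) (hw : ∀ x, 0 ≤ w x ∧ w x ≤ 1)
    (hwE : 1 - 3 * ε ≤ ∫ x, w x ∂μ)
    (T : Set (Fin d → ℝ)) (hT : MeasurableSet T)
    (hTmass : (∫ x, T.indicator w x ∂μ) ≤ 4 * ε) :
    (∫ x, T.indicator (fun y => w y * ∑ i, (U.mulVec y i) ^ 2) x ∂μ) ≤
      2.35 * γ * (Uᵀ * U * S).trace := by
  have hε1 : ε < 1 / 20 := by linarith
  have hγ0 : 0 < γ := by linarith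
  -- basic integrabilities
  have hwInt : Integrable w μ := by
    by_contra h
    rw [integral_undef h] at hwE
    linarith
  set v : (Fin d → ℝ) → ℝ := T.indicator w with hv
  have hvInt : Integrable v μ := hwInt.indicator hT
  set a : ℝ := ∫ x, w x ∂μ with ha
  set b : ℝ := ∫ x, v x ∂μ with hb
  have hvnn : ∀ x, 0 ≤ v x ∧ v x ≤ w x := by
    intro x
    by_cases hx : x ∈ T
    · simp [hv, Set.indicator_of_mem hx, (hw x).1, le_refl]
    · simp [hv, Set.indicator_of_notMem hx, (hw x).1]
  have hb0 : 0 ≤ b := integral_nonneg fun x => (hvnn x).1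
  have ha1 : a ≤ 1 := by
    have := integral_mono hwInt (integrable_const 1) (fun x => (hw x).2)
    simpa using this
  -- the complementary weight
  set w' : (Fin d → ℝ) → ℝ := fun x => w x - v x with hw'def
  have hw' : ∀ x, 0 ≤ w' x ∧ w' x ≤ 1 := by
    intro x
    constructor
    · simp [hw'def]; exact (hvnn x).2
    · have := (hvnn x).1; have := (hw x).2; simp [hw'def]; linarith
  have hw'Int : Integrable w' μ := hwInt.sub hvInt
  have hw'E : (∫ x, w' x ∂μ) = a - b := integral_sub hwInt hvInt
  -- stability applications
  have hstw := hstable w hw (by linarith)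
  have hstw' := hstable w' hw' (by rw [hw'E]; linarith)
  -- integrability of products
  have hprodInt : ∀ (u : (Fin d → ℝ) → ℝ), Integrable u μ → (∀ x, |u x| ≤ 1) →
      ∀ j k : Fin d, Integrable (fun x => u x * (x j * x k)) μ := by
    intro u hu hub j k
    refine (hInt j k).mono (hu.aestronglyMeasurable.mul (hInt j k).aestronglyMeasurable) ?_
    filter_upwards with x
    have h := mul_le_mul_of_nonneg_right (hub x) (abs_nonneg (x j * x k))
    rw [one_mul] at h
    simpa [abs_mul] using h
  have hwP : ∀ j k : Fin d, Integrable (fun x => w x * (x j * x k)) μ :=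
    hprodInt w hwInt (fun x => abs_le.2 ⟨by linarith [(hw x).1], (hw x).2⟩)
  have hvP : ∀ j k : Fin d, Integrable (fun x => v x * (x j * x k)) μ :=
    hprodInt v hvInt (fun x => abs_le.2 ⟨by linarith [(hvnn x).1],
      le_trans (hvnn x).2 (hw x).2⟩)
  have hw'P : ∀ j k : Fin d, Integrable (fun x => w' x * (x j * x k)) μ :=
    hprodInt w' hw'Int (fun x => abs_le.2 ⟨by linarith [(hw' x).1], (hw' x).2⟩)
  -- expansion of the weighted quadratic-form integral as a double sum
  have hexp : ∀ (u : (Fin d → ℝ) → ℝ), (∀ j k : Fin d,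
      Integrable (fun x => u x * (x j * x k)) μ) →
      (∫ x, u x * ∑ i, (U.mulVec x i) ^ 2 ∂μ) =
        ∑ j, ∑ k, (Uᵀ * U) j k * ∫ x, u x * (x j * x k) ∂μ := by
    intro u hu
    have : (∫ x, u x * ∑ i, (U.mulVec x i) ^ 2 ∂μ) =
        ∫ x, ∑ j, ∑ k, (Uᵀ * U) j k * (u x * (x j * x k)) ∂μ := by
      congr 1; funext x; exact key_pointwise U (u x) x
    rw [this]
    refine (integral_finset_sum _ (fun j _ => integrable_finset_sum _
      (fun k _ => (hu j k).const_mul _))).trans ?_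
    refine Finset.sum_congr rfl fun j _ => ?_
    rw [integral_finset_sum _ (fun k _ => (hu j k).const_mul _)]
    exact Finset.sum_congr rfl fun k _ => integral_const_mul _ _
  -- relating the double sum to the trace of UᵀU * weightedSecondMoment
  have htr : ∀ (u : (Fin d → ℝ) → ℝ), (∫ x, u x ∂μ) ≠ 0 →
      (∑ j, ∑ k, (Uᵀ * U) j k * ∫ x, u x * (x j * x k) ∂μ) =
        (∫ x, u x ∂μ) * (Uᵀ * U * weightedSecondMoment μ u).trace := by
    intro u hu
    rw [trace_expand, Finset.mul_sum]
    refine Finset.sum_congr rfl fun j _ => ?_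
    rw [Finset.mul_sum]
    refine Finset.sum_congr rfl fun k _ => ?_
    simp only [weightedSecondMoment, Matrix.of_apply]
    have : (∫ x, u x * (x k * x j) ∂μ) = ∫ x, u x * (x j * x k) ∂μ := by
      congr 1; funext x; ring
    rw [this]
    field_simp
  -- trace bounds from stability
  set t : ℝ := (Uᵀ * U * S).trace with htdef
  have ht0 : 0 ≤ t := trace_mul_psd_nonneg U hS
  have hub : ∀ (M : Matrix (Fin d) (Fin d) ℝ), ((1 + γ) • S - M).PosSemidef →
      (Uᵀ * U * M).trace ≤ (1 + γ) * t := by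
    intro M hM
    have := trace_mul_psd_nonneg U hM
    rw [Matrix.mul_sub, Matrix.trace_sub, Matrix.mul_smul, Matrix.trace_smul] at this
    simp only [smul_eq_mul] at this
    linarith
  have hlb : ∀ (M : Matrix (Fin d) (Fin d) ℝ), (M - (1 - γ) • S).PosSemidef →
      (1 - γ) * t ≤ (Uᵀ * U * M).trace := by
    intro M hM
    have := trace_mul_psd_nonneg U hM
    rw [Matrix.mul_sub, Matrix.trace_sub, Matrix.mul_smul, Matrix.trace_smul] at this
    simp only [smul_eq_mul] at this
    linarith
  -- nonvanishing of the normalizers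
  have ha0 : (0:ℝ) < a := by linarith
  have hab0 : (0:ℝ) < a - b := by linarith
  -- the two quantitative bounds
  have hFw : (∑ j, ∑ k, (Uᵀ * U) j k * ∫ x, w x * (x j * x k) ∂μ) ≤ a * ((1 + γ) * t) := by
    rw [htr w (ne_of_gt ha0)]
    exact mul_le_mul_of_nonneg_left (hub _ hstw.2) (le_of_lt ha0)
  have hFw' : (a - b) * ((1 - γ) * t) ≤
      ∑ j, ∑ k, (Uᵀ * U) j k * ∫ x, w' x * (x j * x k) ∂μ := by
    rw [htr w' (by rw [hw'E]; exact ne_of_gt hab0), hw'E]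
    exact mul_le_mul_of_nonneg_left (hlb _ hstw'.1) (le_of_lt hab0)
  -- rewrite the goal
  have hgoal : (∫ x, T.indicator (fun y => w y * ∑ i, (U.mulVec y i) ^ 2) x ∂μ) =
      ∫ x, v x * ∑ i, (U.mulVec x i) ^ 2 ∂μ := by
    congr 1; funext x
    exact Set.indicator_mul_left T w _
  rw [hgoal, hexp v hvP]
  -- decompose F(v) = F(w) - F(w')
  have hsplit : (∑ j, ∑ k, (Uᵀ * U) j k * ∫ x, v x * (x j * x k) ∂μ) =
      (∑ j, ∑ k, (Uᵀ * U) j k * ∫ x, w x * (x j * x k) ∂μ) -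
      (∑ j, ∑ k, (Uᵀ * U) j k * ∫ x, w' x * (x j * x k) ∂μ) := by
    rw [← Finset.sum_sub_distrib]
    refine Finset.sum_congr rfl fun j _ => ?_
    rw [← Finset.sum_sub_distrib]
    refine Finset.sum_congr rfl fun k _ => ?_
    rw [← mul_sub]
    congr 1
    have hww' : (∫ x, w' x * (x j * x k) ∂μ) =
        (∫ x, w x * (x j * x k) ∂μ) - ∫ x, v x * (x j * x k) ∂μ := by
      rw [← integral_sub (hwP j k) (hvP j k)]
      congr 1; funext x
      simp only [hw'def]; ring
    rw [hww']; ring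
  rw [hsplit]
  -- final numeric bound
  have hcoef : (0:ℝ) ≤ (2.35 * γ - (2 * a * γ + (1 - γ) * b)) * t := by
    apply mul_nonneg _ ht0
    nlinarith
  nlinarith [hFw, hFw']
end
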